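/- arXiv:1602.05084 — 2 statements merged into one kernel-verified Lean document; each statement's English description precedes it below -/
import Mathlib

section
/- If λ > 0 is an eigenvalue of the integral operator A_R (with some continuous eigenfunction), then λ satisfies the equation (λ^{3/2} + √λ·∫₀¹ g(t)² dt + 2 c_g(λ))·cos(1/√λ) + b_g(λ)²·sin(1/√λ) = 0. -/
open Real Set intervalIntegral

/-- `a_g(λ) = ∫₀¹ g(t) cos(t/√λ) dt`. -/
noncomputable def aG (g : ℝ → ℝ) (lam : ℝ) : ℝ :=
  ∫ t in (0:ℝ)..1, g t * Real.cos (t / Real.sqrt lam)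

/-- `b_g(λ) = ∫₀¹ g(t) sin(t/√λ) dt`. -/
noncomputable def bG (g : ℝ → ℝ) (lam : ℝ) : ℝ :=
  ∫ t in (0:ℝ)..1, g t * Real.sin (t / Real.sqrt lam)

/-- `c_g(λ) = ∫₀¹ (∫₀ᵗ g(u) g(t) sin(u/√λ) cos(t/√λ) du) dt`. -/
noncomputable def cG (g : ℝ → ℝ) (lam : ℝ) : ℝ :=
  ∫ t in (0:ℝ)..1, ∫ u in (0:ℝ)..t,
    g u * g t * Real.sin (u / Real.sqrt lam) * Real.cos (t / Real.sqrt lam)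

/-!
Let `h := ∫₀¹ min(·, s) e(s) ds` and `G := ∫₀¹ g e`, so that the eigen-equation reads
`λ e = h - G g`. Since `h(0) = 0`, `h' = ∫ₜ¹ e` (so `h'(1) = 0`) and `h'' = -e`, the function `h`
solves `h'' + h / λ = (G / λ) g`, and Duhamel's formula expresses `h` through `E := h'(0) = ∫₀¹ e`
and `G`. The boundary condition `h'(1) = 0` and the consistency condition
`λ G = ∫₀¹ g (h - G g)` are two linear equations in `(E, G)`, and `(E, G) ≠ 0` because `e ≠ 0`;
the vanishing of their determinant is the claimed equation.
-/

open MeasureTheory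

section Calculus

variable {a b : ℝ}

theorem hasDerivWithinAt_integral_Icc_right {f : ℝ → ℝ} (hf : ContinuousOn f (Icc a b)) {t : ℝ}
    (ht : t ∈ Icc a b) :
    HasDerivWithinAt (fun x => ∫ s in a..x, f s) (f t) (Icc a b) t := by
  have : Fact (t ∈ Icc a b) := ⟨ht⟩
  exact integral_hasDerivWithinAt_right
    ((hf.mono (Icc_subset_Icc_right ht.2)).intervalIntegrable_of_Icc ht.1)
    ⟨Icc a b, self_mem_nhdsWithin, hf.aestronglyMeasurable measurableSet_Icc⟩ (hf t ht)

theorem hasDerivWithinAt_integral_Icc_left {f : ℝ → ℝ} (hf : ContinuousOn f (Icc a b)) {t : ℝ}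
    (ht : t ∈ Icc a b) :
    HasDerivWithinAt (fun x => ∫ s in x..b, f s) (-f t) (Icc a b) t := by
  have : Fact (t ∈ Icc a b) := ⟨ht⟩
  exact integral_hasDerivWithinAt_left
    ((hf.mono (Icc_subset_Icc_left ht.1)).intervalIntegrable_of_Icc ht.2)
    ⟨Icc a b, self_mem_nhdsWithin, hf.aestronglyMeasurable measurableSet_Icc⟩ (hf t ht)

theorem integral_eq_sub_of_hasDerivWithinAt_Icc {f f' : ℝ → ℝ} (hab : a ≤ b)
    (hf : ∀ x ∈ Icc a b, HasDerivWithinAt f (f' x) (Icc a b) x)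
    (hf' : IntervalIntegrable f' volume a b) : ∫ x in a..b, f' x = f b - f a :=
  integral_eq_sub_of_hasDerivAt_of_le hab (fun x hx => (hf x hx).continuousWithinAt)
    (fun x hx => (hf x (Ioo_subset_Icc_self hx)).hasDerivAt (Icc_mem_nhds hx.1 hx.2)) hf'

theorem integral_mul_primitive_add_primitive_mul {p q : ℝ → ℝ} (hab : a ≤ b)
    (hp : ContinuousOn p (Icc a b)) (hq : ContinuousOn q (Icc a b)) :
    ∫ x in a..b, (p x * ∫ s in a..x, q s) + (∫ s in a..x, p s) * q x
      = (∫ x in a..b, p x) * ∫ x in a..b, q x := by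
  have hP : ∀ x ∈ Icc a b, HasDerivWithinAt (fun x => ∫ s in a..x, p s) (p x) (Icc a b) x :=
    fun x hx => hasDerivWithinAt_integral_Icc_right hp hx
  have hQ : ∀ x ∈ Icc a b, HasDerivWithinAt (fun x => ∫ s in a..x, q s) (q x) (Icc a b) x :=
    fun x hx => hasDerivWithinAt_integral_Icc_right hq hx
  rw [← uIcc_of_le hab] at hp hq hP hQ
  simpa using integral_deriv_mul_eq_sub_of_hasDerivWithinAt hP hQ
    hp.intervalIntegrable hq.intervalIntegrable

section Duhamel

variable {f f' r : ℝ → ℝ} {w : ℝ} (hab : a ≤ b)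
  (hf : ∀ x ∈ Icc a b, HasDerivWithinAt f (f' x) (Icc a b) x)
  (hf' : ∀ x ∈ Icc a b, HasDerivWithinAt f' (r x - w ^ 2 * f x) (Icc a b) x)
  (hr : IntervalIntegrable r volume a b)
include hab hf hf' hr

theorem duhamel_sin :
    w * f b = w * f a * cos (w * (b - a)) + f' a * sin (w * (b - a))
      + ∫ x in a..b, r x * sin (w * (b - x)) := by
  have hF : ∀ x ∈ Icc a b, HasDerivWithinAt
      (fun x => f' x * sin (w * (b - x)) + w * f x * cos (w * (b - x)))
      (r x * sin (w * (b - x))) (Icc a b) x := by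
    intro x hx
    have hθ : HasDerivAt (fun x => w * (b - x)) (-w) x := by
      simpa using ((hasDerivAt_id x).const_sub b).const_mul w
    refine (((hf' x hx).mul hθ.sin.hasDerivWithinAt).add
      (((hf x hx).const_mul w).mul hθ.cos.hasDerivWithinAt)).congr_deriv ?_
    ring
  have := integral_eq_sub_of_hasDerivWithinAt_Icc hab hF (hr.mul_continuousOn (by fun_prop))
  simp only [sub_self, mul_zero, sin_zero, cos_zero, mul_one, zero_add] at this
  linarith

theorem duhamel_cos :
    f' b = f' a * cos (w * (b - a)) - w * f a * sin (w * (b - a))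
      + ∫ x in a..b, r x * cos (w * (b - x)) := by
  have hF : ∀ x ∈ Icc a b, HasDerivWithinAt
      (fun x => f' x * cos (w * (b - x)) - w * f x * sin (w * (b - x)))
      (r x * cos (w * (b - x))) (Icc a b) x := by
    intro x hx
    have hθ : HasDerivAt (fun x => w * (b - x)) (-w) x := by
      simpa using ((hasDerivAt_id x).const_sub b).const_mul w
    refine (((hf' x hx).mul hθ.cos.hasDerivWithinAt).sub
      (((hf x hx).const_mul w).mul hθ.sin.hasDerivWithinAt)).congr_deriv ?_
    ring
  have := integral_eq_sub_of_hasDerivWithinAt_Icc hab hF (hr.mul_continuousOn (by fun_prop))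
  simp only [sub_self, mul_zero, sin_zero, cos_zero, mul_one, sub_zero] at this
  linarith

end Duhamel

theorem integral_mul_sin_mul_sub {g : ℝ → ℝ} (hg : IntervalIntegrable g volume a b) (w t : ℝ) :
    ∫ u in a..b, g u * sin (w * (t - u))
      = sin (w * t) * (∫ u in a..b, g u * cos (w * u))
        - cos (w * t) * ∫ u in a..b, g u * sin (w * u) := by
  rw [← intervalIntegral.integral_const_mul, ← intervalIntegral.integral_const_mul, ← integral_sub
    ((hg.mul_continuousOn (by fun_prop)).const_mul _)
    ((hg.mul_continuousOn (by fun_prop)).const_mul _)]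
  refine integral_congr fun u _ => ?_
  simp only [mul_sub, sin_sub]
  ring

theorem integral_mul_cos_mul_sub {g : ℝ → ℝ} (hg : IntervalIntegrable g volume a b) (w t : ℝ) :
    ∫ u in a..b, g u * cos (w * (t - u))
      = cos (w * t) * (∫ u in a..b, g u * cos (w * u))
        + sin (w * t) * ∫ u in a..b, g u * sin (w * u) := by
  rw [← intervalIntegral.integral_const_mul, ← intervalIntegral.integral_const_mul, ← integral_add
    ((hg.mul_continuousOn (by fun_prop)).const_mul _)
    ((hg.mul_continuousOn (by fun_prop)).const_mul _)]
  refine integral_congr fun u _ => ?_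
  simp only [mul_sub, cos_sub]
  ring

end Calculus

theorem mul_sub_mul_eq_zero_of_ne_zero_solution {R : Type*} [CommRing R] [NoZeroDivisors R]
    {a b c d x y : R} (h₁ : a * x + b * y = 0) (h₂ : c * x + d * y = 0) (hxy : x ≠ 0 ∨ y ≠ 0) :
    a * d - b * c = 0 := by
  rcases hxy with hx | hy
  · have : x * (a * d - b * c) = 0 := by linear_combination d * h₁ - b * h₂
    exact (mul_eq_zero.1 this).resolve_left hx
  · have : y * (a * d - b * c) = 0 := by linear_combination a * h₂ - c * h₁
    exact (mul_eq_zero.1 this).resolve_left hy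

noncomputable def minKernelOp (e : ℝ → ℝ) (t : ℝ) : ℝ :=
  ∫ s in (0:ℝ)..1, min t s * e s

section MinKernel

variable {e : ℝ → ℝ} (he : ContinuousOn e (Icc 0 1))
include he

theorem minKernelOp_eq {t : ℝ} (ht : t ∈ Icc (0:ℝ) 1) :
    minKernelOp e t = (∫ s in (0:ℝ)..t, s * e s) + t * ∫ s in t..1, e s := by
  have hint : ∀ {x y : ℝ}, x ∈ Icc (0:ℝ) 1 → y ∈ Icc (0:ℝ) 1 →
      IntervalIntegrable (fun s => min t s * e s) volume x y := fun hx hy =>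
    (((continuous_const.min continuous_id).continuousOn.mul he).mono
      (uIcc_subset_Icc hx hy)).intervalIntegrable
  rw [minKernelOp, ← integral_add_adjacent_intervals (hint ⟨le_rfl, zero_le_one⟩ ht)
    (hint ht ⟨zero_le_one, le_rfl⟩), ← intervalIntegral.integral_const_mul]
  congr 1 <;> refine integral_congr fun s hs => ?_
  · rw [uIcc_of_le ht.1] at hs
    simp only [min_eq_right hs.2]
  · rw [uIcc_of_le ht.2] at hs
    simp only [min_eq_left hs.1]

theorem minKernelOp_zero : minKernelOp e 0 = 0 := by
  simp [minKernelOp_eq he (left_mem_Icc.2 zero_le_one)]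

theorem hasDerivWithinAt_minKernelOp {t : ℝ} (ht : t ∈ Icc (0:ℝ) 1) :
    HasDerivWithinAt (minKernelOp e) (∫ s in t..1, e s) (Icc 0 1) t := by
  have h := (hasDerivWithinAt_integral_Icc_right (continuousOn_id.mul he) ht).add
    ((hasDerivWithinAt_id t _).mul (hasDerivWithinAt_integral_Icc_left he ht))
  refine (h.congr (fun x hx => minKernelOp_eq he hx) (minKernelOp_eq he ht)).congr_deriv ?_
  simp only [Pi.mul_apply, id]
  ring

end MinKernel

theorem cG_eq (g : ℝ → ℝ) (lam : ℝ) :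
    cG g lam
      = ∫ t in (0:ℝ)..1, g t * cos (t / √lam) * ∫ u in (0:ℝ)..t, g u * sin (u / √lam) := by
  refine integral_congr fun t _ => ?_
  rw [← intervalIntegral.integral_const_mul]
  exact integral_congr fun u _ => by ring

section Eigen

variable {g e : ℝ → ℝ} {lam : ℝ} (hg : ContinuousOn g (Icc 0 1))
  (he : ContinuousOn e (Icc 0 1))
  (heig : ∀ t ∈ Icc (0:ℝ) 1, (∫ s in (0:ℝ)..1, (min t s - g t * g s) * e s) = lam * e t)
include hg he heig

theorem minKernelOp_eq_of_eigen {t : ℝ} (ht : t ∈ Icc (0:ℝ) 1) :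
    minKernelOp e t = lam * e t + (∫ s in (0:ℝ)..1, g s * e s) * g t := by
  have hsplit : (∫ s in (0:ℝ)..1, (min t s - g t * g s) * e s)
      = minKernelOp e t - g t * ∫ s in (0:ℝ)..1, g s * e s := by
    have hmin : IntervalIntegrable (fun s => min t s * e s) volume 0 1 :=
      ((continuous_const.min continuous_id).continuousOn.mul he).intervalIntegrable_of_Icc
        zero_le_one
    have hge : IntervalIntegrable (fun s => g t * (g s * e s)) volume 0 1 :=
      ((hg.mul he).intervalIntegrable_of_Icc zero_le_one).const_mul _
    rw [minKernelOp, ← intervalIntegral.integral_const_mul, ← integral_sub hmin hge]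
    exact integral_congr fun s _ => by ring
  linarith [heig t ht]

theorem hasDerivWithinAt_integral_to_one_of_eigen (hlam : lam ≠ 0) {t : ℝ}
    (ht : t ∈ Icc (0:ℝ) 1) :
    HasDerivWithinAt (fun x => ∫ s in x..1, e s)
      (lam⁻¹ * (∫ s in (0:ℝ)..1, g s * e s) * g t - lam⁻¹ * minKernelOp e t) (Icc 0 1) t := by
  refine (hasDerivWithinAt_integral_Icc_left he ht).congr_deriv ?_
  rw [minKernelOp_eq_of_eigen hg he heig ht]
  field_simp
  ring

theorem minKernelOp_div_sqrt_eq (hlam : 0 < lam) {t : ℝ} (ht : t ∈ Icc (0:ℝ) 1) :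
    minKernelOp e t / √lam = (∫ s in (0:ℝ)..1, e s) * sin (t / √lam)
      + lam⁻¹ * (∫ s in (0:ℝ)..1, g s * e s)
        * (sin (t / √lam) * (∫ u in (0:ℝ)..t, g u * cos (u / √lam))
          - cos (t / √lam) * ∫ u in (0:ℝ)..t, g u * sin (u / √lam)) := by
  have hw : (√lam)⁻¹ ^ 2 = lam⁻¹ := by rw [inv_pow, sq_sqrt hlam.le]
  have hsub : Icc 0 t ⊆ Icc (0:ℝ) 1 := Icc_subset_Icc_right ht.2
  have hgi : IntervalIntegrable g volume 0 t := (hg.mono hsub).intervalIntegrable_of_Icc ht.1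
  have h := duhamel_sin (w := (√lam)⁻¹)
    (r := fun x => lam⁻¹ * (∫ s in (0:ℝ)..1, g s * e s) * g x)
    ht.1 (fun x hx => (hasDerivWithinAt_minKernelOp he (hsub hx)).mono hsub)
    (fun x hx => hw ▸ (hasDerivWithinAt_integral_to_one_of_eigen hg he heig hlam.ne'
      (hsub hx)).mono hsub) (hgi.const_mul _)
  simp only [minKernelOp_zero he, mul_zero, zero_mul, zero_add, sub_zero, mul_assoc,
    intervalIntegral.integral_const_mul] at h
  rw [integral_mul_sin_mul_sub hgi] at h
  simp only [inv_mul_eq_div] at h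
  rw [h]
  ring

theorem boundary_condition_of_eigen (hlam : 0 < lam) :
    (∫ s in (0:ℝ)..1, e s) * cos (1 / √lam)
      + lam⁻¹ * (∫ s in (0:ℝ)..1, g s * e s)
        * (cos (1 / √lam) * aG g lam + sin (1 / √lam) * bG g lam) = 0 := by
  have hw : (√lam)⁻¹ ^ 2 = lam⁻¹ := by rw [inv_pow, sq_sqrt hlam.le]
  have hgi : IntervalIntegrable g volume 0 1 := hg.intervalIntegrable_of_Icc zero_le_one
  have h := duhamel_cos (w := (√lam)⁻¹)
    (r := fun x => lam⁻¹ * (∫ s in (0:ℝ)..1, g s * e s) * g x)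
    zero_le_one (fun x hx => hasDerivWithinAt_minKernelOp he hx)
    (fun x hx => hw ▸ hasDerivWithinAt_integral_to_one_of_eigen hg he heig hlam.ne' hx)
    (hgi.const_mul _)
  simp only [minKernelOp_zero he, integral_same, mul_zero, zero_mul, sub_zero, mul_assoc,
    intervalIntegral.integral_const_mul] at h
  rw [integral_mul_cos_mul_sub hgi] at h
  simp only [inv_mul_eq_div] at h
  rw [aG, bG]
  linear_combination -h

theorem consistency_condition_of_eigen (hlam : 0 < lam) :
    lam * (∫ s in (0:ℝ)..1, g s * e s)
      = √lam * ((∫ s in (0:ℝ)..1, e s) * bG g lam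
          + lam⁻¹ * (∫ s in (0:ℝ)..1, g s * e s) * (aG g lam * bG g lam - 2 * cG g lam))
        - (∫ s in (0:ℝ)..1, g s * e s) * ∫ t in (0:ℝ)..1, g t ^ 2 := by
  set E := ∫ s in (0:ℝ)..1, e s
  set G := ∫ s in (0:ℝ)..1, g s * e s
  have hS : ContinuousOn (fun t => ∫ u in (0:ℝ)..t, g u * sin (u / √lam)) (Icc 0 1) :=
    fun t ht =>
      (hasDerivWithinAt_integral_Icc_right (hg.mul (by fun_prop)) ht).continuousWithinAt
  have hC : ContinuousOn (fun t => ∫ u in (0:ℝ)..t, g u * cos (u / √lam)) (Icc 0 1) :=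
    fun t ht =>
      (hasDerivWithinAt_integral_Icc_right (hg.mul (by fun_prop)) ht).continuousWithinAt
  -- `g h` is split so that its symmetric part integrates by parts to `a_g b_g`, the rest to `c_g`.
  have hpt : ∀ s ∈ uIcc (0:ℝ) 1, lam * (g s * e s)
      = √lam * (E * (g s * sin (s / √lam)) + lam⁻¹ * G
          * ((g s * sin (s / √lam) * (∫ u in (0:ℝ)..s, g u * cos (u / √lam))
              + (∫ u in (0:ℝ)..s, g u * sin (u / √lam)) * (g s * cos (s / √lam)))
            - 2 * (g s * cos (s / √lam) * ∫ u in (0:ℝ)..s, g u * sin (u / √lam))))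
        - G * g s ^ 2 := by
    intro s hs
    rw [uIcc_of_le zero_le_one] at hs
    have hrepr := minKernelOp_div_sqrt_eq hg he heig hlam hs
    rw [div_eq_iff (sqrt_pos.2 hlam).ne'] at hrepr
    linear_combination g s * (minKernelOp_eq_of_eigen hg he heig hs).symm + g s * hrepr
  rw [← intervalIntegral.integral_const_mul, integral_congr hpt, intervalIntegral.integral_sub,
    intervalIntegral.integral_const_mul, intervalIntegral.integral_add,
    intervalIntegral.integral_const_mul, intervalIntegral.integral_const_mul,
    intervalIntegral.integral_sub,
    integral_mul_primitive_add_primitive_mul (p := fun x => g x * sin (x / √lam))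
      (q := fun x => g x * cos (x / √lam)) zero_le_one (hg.mul (by fun_prop))
      (hg.mul (by fun_prop)),
    intervalIntegral.integral_const_mul, intervalIntegral.integral_const_mul, ← cG_eq, aG, bG]
  · ring
  all_goals exact ContinuousOn.intervalIntegrable_of_Icc zero_le_one (by fun_prop)

theorem coefficients_ne_zero_of_eigen (hlam : 0 < lam) (hne : ∃ t ∈ Icc (0:ℝ) 1, e t ≠ 0) :
    (∫ s in (0:ℝ)..1, e s) ≠ 0 ∨ (∫ s in (0:ℝ)..1, g s * e s) ≠ 0 := by
  obtain ⟨t, ht, het⟩ := hne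
  by_contra! h
  have hrepr := minKernelOp_div_sqrt_eq hg he heig hlam ht
  have hker := minKernelOp_eq_of_eigen hg he heig ht
  rw [h.1, h.2] at hrepr
  rw [h.2, (by simpa [(sqrt_pos.2 hlam).ne'] using hrepr : minKernelOp e t = 0)] at hker
  exact het (by simpa [hlam.ne'] using hker.symm)

end Eigen

theorem stmt3_general (g g' : ℝ → ℝ)
    (hg1 : ∀ t ∈ Set.Icc (0:ℝ) 1, HasDerivWithinAt g (g' t) (Set.Icc 0 1) t)
    (lam : ℝ) (hlam : 0 < lam)
    (heig : ∃ e : ℝ → ℝ, ContinuousOn e (Set.Icc 0 1) ∧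
      (∃ t ∈ Set.Icc (0:ℝ) 1, e t ≠ 0) ∧
      ∀ t ∈ Set.Icc (0:ℝ) 1,
        (∫ s in (0:ℝ)..1, (min t s - g t * g s) * e s) = lam * e t) :
    (lam * Real.sqrt lam + Real.sqrt lam * (∫ t in (0:ℝ)..1, (g t) ^ 2) + 2 * cG g lam)
        * Real.cos (1 / Real.sqrt lam)
      + (bG g lam) ^ 2 * Real.sin (1 / Real.sqrt lam) = 0 := by
  obtain ⟨e, he, hne, heq⟩ := heig
  have hg : ContinuousOn g (Icc 0 1) := fun t ht => (hg1 t ht).continuousWithinAt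
  set E := ∫ s in (0:ℝ)..1, e s
  set G := ∫ s in (0:ℝ)..1, g s * e s
  have h₁ : cos (1 / √lam) * E
      + lam⁻¹ * (cos (1 / √lam) * aG g lam + sin (1 / √lam) * bG g lam) * G = 0 := by
    linear_combination boundary_condition_of_eigen hg he heq hlam
  have h₂ : √lam * bG g lam * E + (√lam * lam⁻¹ * (aG g lam * bG g lam - 2 * cG g lam)
      - (∫ t in (0:ℝ)..1, g t ^ 2) - lam) * G = 0 := by
    linear_combination -consistency_condition_of_eigen hg he heq hlam
  have hdet := mul_sub_mul_eq_zero_of_ne_zero_solution h₁ h₂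
    (coefficients_ne_zero_of_eigen hg he heq hlam hne)
  have hinv : √lam ^ 2 * lam⁻¹ = 1 := by rw [sq_sqrt hlam.le, mul_inv_cancel₀ hlam.ne']
  linear_combination -√lam * hdet
    - (2 * cG g lam * cos (1 / √lam) + bG g lam ^ 2 * sin (1 / √lam)) * hinv

/-- Any positive eigenvalue of the integral operator with kernel
`R(s,t) = min(s,t) - g(s)g(t)` satisfies the eigenvalue equation
`(λ^{3/2} + √λ ∫₀¹ g² + 2 c_g(λ)) cos(1/√λ) + b_g(λ)² sin(1/√λ) = 0`. -/
theorem stmt3 (g g' g'' : ℝ → ℝ)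
    (hg1 : ∀ t ∈ Set.Icc (0:ℝ) 1, HasDerivWithinAt g (g' t) (Set.Icc 0 1) t)
    (hg2 : ∀ t ∈ Set.Icc (0:ℝ) 1, HasDerivWithinAt g' (g'' t) (Set.Icc 0 1) t)
    (hg2c : ContinuousOn g'' (Set.Icc 0 1))
    (hg0 : g 0 = 0)
    (hgnorm : ∫ u in (0:ℝ)..1, (g' u) ^ 2 = 1)
    (lam : ℝ) (hlam : 0 < lam)
    (heig : ∃ e : ℝ → ℝ, ContinuousOn e (Set.Icc 0 1) ∧
      (∃ t ∈ Set.Icc (0:ℝ) 1, e t ≠ 0) ∧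
      ∀ t ∈ Set.Icc (0:ℝ) 1,
        (∫ s in (0:ℝ)..1, (min t s - g t * g s) * e s) = lam * e t) :
    (lam * Real.sqrt lam + Real.sqrt lam * (∫ t in (0:ℝ)..1, (g t) ^ 2) + 2 * cG g lam)
        * Real.cos (1 / Real.sqrt lam)
      + (bG g lam) ^ 2 * Real.sin (1 / Real.sqrt lam) = 0 :=
  stmt3_general g g' hg1 lam hlam heig
end

section
/- If λ > 0 satisfies the equation (λ^{3/2} + √λ·∫₀¹ g(t)² dt + 2 c_g(λ))·cos(1/√λ) + b_g(λ)²·sin(1/√λ) = 0, then λ is an eigenvalue of the integral operator A_R, i.e., there exists a continuous function e : [0,1] → ℝ, not identically zero, with ∫₀¹ R(t,s) e(s) ds = λ e(t) for all t ∈ [0,1]. -/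
open Real Set intervalIntegral

/-!
Put `B = ∫₀¹ g e`. The eigenvalue equation says `∫₀¹ min(t,s) e(s) ds = λ e(t) + B g(t)`, and
`min` is the Green kernel of `-d²/dt²` for the conditions `f(0) = 0`, `f'(1) = 0`. So it suffices
that `λ e'' + e = -B g''`, that `λ e'(1) + B g'(1) = 0` (the condition at `0` holds automatically
here) and that `∫ g e = B`. With `w = √λ` the solutions of the differential equation
are `A sin(t/w)` plus a variation-of-constants term linear in `B`, and the two remaining
conditions form a homogeneous linear system in `(A, B)` whose determinant vanishes by the
hypothesis on `λ`. A nonzero solution `(A, B)` gives a nonzero `e`: if `e ≡ 0` on `[0, 1]`, then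
`B g'' ≡ 0` and `B g'(1) = 0`, so `B = 0` since `g'` is not identically zero, and then `A = 0`.
-/

open MeasureTheory

section Icc

variable {f : ℝ → ℝ} {a b : ℝ}

theorem constant_of_hasDerivWithinAt_Icc_zero
    (hf : ∀ x ∈ Icc a b, HasDerivWithinAt f 0 (Icc a b) x) : ∀ x ∈ Icc a b, f x = f a :=
  constant_of_has_deriv_right_zero (fun x hx => (hf x hx).continuousWithinAt) fun x hx =>
    (hf x (Ico_subset_Icc_self hx)).mono_of_mem_nhdsWithin (Icc_mem_nhdsGE_of_mem hx)

theorem eq_zero_of_hasDerivWithinAt_Icc {f' x : ℝ} (hab : a < b) (hf : ∀ y ∈ Icc a b, f y = 0)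
    (hx : x ∈ Icc a b) (h : HasDerivWithinAt f f' (Icc a b) x) : f' = 0 :=
  (uniqueDiffOn_Icc hab x hx).eq_deriv _ h <|
    (hasDerivWithinAt_const x _ 0).congr hf (hf x hx)

end Icc

theorem exists_ne_zero_of_mul_sub_mul_eq_zero {K : Type*} [Field K] {a b c d : K}
    (h : a * d - b * c = 0) :
    ∃ x y : K, (x ≠ 0 ∨ y ≠ 0) ∧ a * x + b * y = 0 ∧ c * x + d * y = 0 := by
  obtain ⟨v, hv, hMv⟩ := Matrix.exists_mulVec_eq_zero_iff.mpr
    ((Matrix.det_fin_two_of a b c d).trans h)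
  refine ⟨v 0, v 1, ?_, ?_, ?_⟩
  · by_contra! h0
    exact hv (funext fun i => by fin_cases i <;> simp [h0])
  · simpa [Matrix.mulVec, dotProduct, Fin.sum_univ_two] using congrFun hMv 0
  · simpa [Matrix.mulVec, dotProduct, Fin.sum_univ_two] using congrFun hMv 1

section Green

variable {e : ℝ → ℝ}

theorem integral_min_mul_eq (he : Continuous e) {t : ℝ} (ht : t ∈ Icc (0:ℝ) 1) :
    ∫ s in (0:ℝ)..1, min t s * e s = (∫ s in (0:ℝ)..t, s * e s) + t * ∫ s in t..1, e s := by
  have hint : ∀ a b : ℝ, IntervalIntegrable (fun s => min t s * e s) volume a b := fun _ _ =>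
    ((continuous_const.min continuous_id).mul he).intervalIntegrable _ _
  rw [← integral_add_adjacent_intervals (hint 0 t) (hint t 1),
    ← intervalIntegral.integral_const_mul]
  congr 1
  · refine integral_congr fun s hs => ?_
    rw [uIcc_of_le ht.1] at hs
    simp only [min_eq_right hs.2]
  · refine integral_congr fun s hs => ?_
    rw [uIcc_of_le ht.2] at hs
    simp only [min_eq_left hs.1]

theorem hasDerivAt_integral_left_of_continuous (he : Continuous e) (b t : ℝ) :
    HasDerivAt (fun t => ∫ s in t..b, e s) (-e t) t :=
  integral_hasDerivAt_left (he.intervalIntegrable t b) (he.stronglyMeasurableAtFilter _ _)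
    he.continuousAt

theorem hasDerivAt_integral_mul_add_mul_integral (he : Continuous e) (t : ℝ) :
    HasDerivAt (fun t => (∫ s in (0:ℝ)..t, s * e s) + t * ∫ s in t..1, e s)
      (∫ s in t..1, e s) t := by
  have hse : Continuous fun s => s * e s := continuous_id.mul he
  exact ((hse.integral_hasStrictDerivAt 0 t).hasDerivAt.add
    ((hasDerivAt_id t).mul (hasDerivAt_integral_left_of_continuous he 1 t))).congr_deriv (by simp)

theorem integral_min_mul_eq_of_hasDerivWithinAt {f f' : ℝ → ℝ} (he : Continuous e)
    (hf : ∀ t ∈ Icc (0:ℝ) 1, HasDerivWithinAt f (f' t) (Icc 0 1) t)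
    (hf' : ∀ t ∈ Icc (0:ℝ) 1, HasDerivWithinAt f' (-e t) (Icc 0 1) t)
    (hf0 : f 0 = 0) (hf'1 : f' 1 = 0) :
    ∀ t ∈ Icc (0:ℝ) 1, ∫ s in (0:ℝ)..1, min t s * e s = f t := by
  have hf'_eq : ∀ t ∈ Icc (0:ℝ) 1, (∫ s in t..1, e s) - f' t = 0 := by
    have hconst := constant_of_hasDerivWithinAt_Icc_zero
      (f := fun t => (∫ s in t..1, e s) - f' t) fun t ht =>
        ((hasDerivAt_integral_left_of_continuous he 1 t).hasDerivWithinAt.sub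
          (hf' t ht)).congr_deriv (by ring)
    intro t ht
    have h1 := hconst 1 (right_mem_Icc.2 zero_le_one)
    simp only [integral_same, hf'1, sub_zero] at h1
    rw [hconst t ht, ← h1]
  have hconst := constant_of_hasDerivWithinAt_Icc_zero
    (f := fun t => (∫ s in (0:ℝ)..t, s * e s) + t * (∫ s in t..1, e s) - f t) fun t ht =>
      ((hasDerivAt_integral_mul_add_mul_integral he t).hasDerivWithinAt.sub
        (hf t ht)).congr_deriv (hf'_eq t ht)
  intro t ht
  have := hconst t ht
  simp only [integral_same, zero_mul, add_zero, hf0, sub_zero] at this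
  rw [integral_min_mul_eq he ht]
  linarith

end Green

namespace MinKernel

variable {g g' g'' : ℝ → ℝ} {w A B : ℝ}

noncomputable def cosIntegral (g : ℝ → ℝ) (w t : ℝ) : ℝ := ∫ u in (0:ℝ)..t, g u * cos (u / w)

noncomputable def sinIntegral (g : ℝ → ℝ) (w t : ℝ) : ℝ := ∫ u in (0:ℝ)..t, g u * sin (u / w)

/-- By the addition formula this is `∫₀ᵗ g(u) sin((t - u)/w) du`. -/
noncomputable def sinConv (g : ℝ → ℝ) (w t : ℝ) : ℝ :=
  sin (t / w) * cosIntegral g w t - cos (t / w) * sinIntegral g w t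

/-- By the addition formula this is `∫₀ᵗ g(u) cos((t - u)/w) du`. -/
noncomputable def cosConv (g : ℝ → ℝ) (w t : ℝ) : ℝ :=
  cos (t / w) * cosIntegral g w t + sin (t / w) * sinIntegral g w t

theorem hasDerivAt_sin_div (w t : ℝ) : HasDerivAt (fun t => sin (t / w)) (cos (t / w) / w) t :=
  ((hasDerivAt_sin _).comp t ((hasDerivAt_id t).div_const w)).congr_deriv (by simp [div_eq_mul_inv])

theorem hasDerivAt_cos_div (w t : ℝ) : HasDerivAt (fun t => cos (t / w)) (-sin (t / w) / w) t :=
  ((hasDerivAt_cos _).comp t ((hasDerivAt_id t).div_const w)).congr_deriv (by simp [div_eq_mul_inv])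

theorem hasDerivAt_cosIntegral (hg : Continuous g) (t : ℝ) :
    HasDerivAt (cosIntegral g w) (g t * cos (t / w)) t :=
  ((hg.mul (continuous_cos.comp (continuous_id.div_const w))).integral_hasStrictDerivAt
    0 t).hasDerivAt

theorem hasDerivAt_sinIntegral (hg : Continuous g) (t : ℝ) :
    HasDerivAt (sinIntegral g w) (g t * sin (t / w)) t :=
  ((hg.mul (continuous_sin.comp (continuous_id.div_const w))).integral_hasStrictDerivAt
    0 t).hasDerivAt

theorem hasDerivAt_sinConv (hg : Continuous g) (t : ℝ) :
    HasDerivAt (sinConv g w) (cosConv g w t / w) t :=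
  (((hasDerivAt_sin_div w t).mul (hasDerivAt_cosIntegral hg t)).sub
    ((hasDerivAt_cos_div w t).mul (hasDerivAt_sinIntegral hg t))).congr_deriv
      (by simp only [cosConv]; ring)

theorem hasDerivAt_cosConv (hg : Continuous g) (t : ℝ) :
    HasDerivAt (cosConv g w) (g t - sinConv g w t / w) t :=
  (((hasDerivAt_cos_div w t).mul (hasDerivAt_cosIntegral hg t)).add
    ((hasDerivAt_sin_div w t).mul (hasDerivAt_sinIntegral hg t))).congr_deriv
      (by simp only [sinConv]; linear_combination g t * sin_sq_add_cos_sq (t / w))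

theorem continuous_sinConv (hg : Continuous g) : Continuous (sinConv g w) :=
  continuous_iff_continuousAt.2 fun t => (hasDerivAt_sinConv hg t).continuousAt

theorem cosConv_zero : cosConv g w 0 = 0 := by
  simp [cosConv, cosIntegral, sinIntegral]

theorem integral_mul_sinConv (hg : Continuous g) :
    ∫ t in (0:ℝ)..1, g t * sinConv g w t = cosIntegral g w 1 * sinIntegral g w 1
      - 2 * ∫ t in (0:ℝ)..1, g t * cos (t / w) * sinIntegral g w t := by
  have hC : Continuous (cosIntegral g w) :=
    continuous_iff_continuousAt.2 fun t => (hasDerivAt_cosIntegral hg t).continuousAt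
  have hS : Continuous (sinIntegral g w) :=
    continuous_iff_continuousAt.2 fun t => (hasDerivAt_sinIntegral hg t).continuousAt
  -- `g · sinConv = (cosIntegral · sinIntegral)' - 2 g cos(t/w) sinIntegral`
  have hprod : ∫ t in (0:ℝ)..1, (g t * cos (t / w) * sinIntegral g w t
      + cosIntegral g w t * (g t * sin (t / w))) = cosIntegral g w 1 * sinIntegral g w 1 := by
    rw [integral_eq_sub_of_hasDerivAt
      (fun t _ => (hasDerivAt_cosIntegral hg t).mul (hasDerivAt_sinIntegral hg t))
      (Continuous.intervalIntegrable (by fun_prop) _ _)]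
    simp [cosIntegral]
  rw [← hprod, ← intervalIntegral.integral_const_mul, ← integral_sub
    (Continuous.intervalIntegrable (by fun_prop) _ _)
    (Continuous.intervalIntegrable (by fun_prop) _ _)]
  exact integral_congr fun t _ => by simp only [sinConv]; ring

/-- The solutions of `w² e'' + e = -B g''`: `A sin(t/w)` plus the particular solution given by
variation of constants. -/
noncomputable def eigenCandidate (g : ℝ → ℝ) (w A B t : ℝ) : ℝ :=
  A * sin (t / w) + B * (sinConv g w t / w ^ 3 - g t / w ^ 2)

noncomputable def eigenCandidateDeriv (g g' : ℝ → ℝ) (w A B t : ℝ) : ℝ :=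
  A * (cos (t / w) / w) + B * (cosConv g w t / w ^ 4 - g' t / w ^ 2)

theorem continuous_eigenCandidate (hg : Continuous g) : Continuous (eigenCandidate g w A B) := by
  have := continuous_sinConv (w := w) hg
  unfold eigenCandidate
  fun_prop

theorem hasDerivWithinAt_eigenCandidate (hg : Continuous g) {s : Set ℝ} {t : ℝ}
    (hg1 : HasDerivWithinAt g (g' t) s t) :
    HasDerivWithinAt (eigenCandidate g w A B) (eigenCandidateDeriv g g' w A B t) s t :=
  (((hasDerivAt_sin_div w t).hasDerivWithinAt.const_mul A).add
    ((((hasDerivAt_sinConv hg t).hasDerivWithinAt.div_const (w ^ 3)).sub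
      (hg1.div_const (w ^ 2))).const_mul B)).congr_deriv
    (by simp only [eigenCandidateDeriv]; ring)

theorem hasDerivWithinAt_eigenCandidateDeriv (hg : Continuous g) (hw : w ≠ 0) {s : Set ℝ}
    {t : ℝ} (hg2 : HasDerivWithinAt g' (g'' t) s t) :
    HasDerivWithinAt (eigenCandidateDeriv g g' w A B)
      (-(eigenCandidate g w A B t + B * g'' t) / w ^ 2) s t :=
  ((((hasDerivAt_cos_div w t).div_const w).hasDerivWithinAt.const_mul A).add
    ((((hasDerivAt_cosConv hg t).hasDerivWithinAt.div_const (w ^ 4)).sub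
      (hg2.div_const (w ^ 2))).const_mul B)).congr_deriv
    (by simp only [eigenCandidate]; field_simp; ring)

theorem sq_mul_eigenCandidate_zero_add (hw : w ≠ 0) :
    w ^ 2 * eigenCandidate g w A B 0 + B * g 0 = 0 := by
  simp only [eigenCandidate, sinConv, zero_div, sin_zero, cos_zero, sinIntegral, integral_same]
  field_simp
  ring

theorem eigenCandidateDeriv_zero :
    eigenCandidateDeriv g g' w A B 0 = A / w - B * g' 0 / w ^ 2 := by
  simp only [eigenCandidateDeriv, cosConv_zero, zero_div, cos_zero]
  ring

theorem sq_mul_eigenCandidateDeriv_add (hw : w ≠ 0) (t : ℝ) :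
    w ^ 2 * eigenCandidateDeriv g g' w A B t + B * g' t
      = A * w * cos (t / w) + B * cosConv g w t / w ^ 2 := by
  simp only [eigenCandidateDeriv]
  field_simp
  ring

theorem integral_mul_eigenCandidate (hg : Continuous g) :
    ∫ t in (0:ℝ)..1, g t * eigenCandidate g w A B t
      = A * sinIntegral g w 1 + B * ((cosIntegral g w 1 * sinIntegral g w 1
        - 2 * ∫ t in (0:ℝ)..1, g t * cos (t / w) * sinIntegral g w t) / w ^ 3
        - (∫ t in (0:ℝ)..1, g t ^ 2) / w ^ 2) := by
  have := continuous_sinConv (w := w) hg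
  have hexp : (fun t => g t * eigenCandidate g w A B t) = fun t =>
      A * (g t * sin (t / w)) + (B / w ^ 3 * (g t * sinConv g w t) - B / w ^ 2 * g t ^ 2) := by
    funext t
    simp only [eigenCandidate]
    ring
  rw [hexp, intervalIntegral.integral_add, intervalIntegral.integral_sub,
    intervalIntegral.integral_const_mul, intervalIntegral.integral_const_mul,
    intervalIntegral.integral_const_mul, integral_mul_sinConv hg, sinIntegral]
  · ring
  all_goals exact Continuous.intervalIntegrable (by fun_prop) _ _

theorem exists_eigenCandidate_ne_zero (hg : Continuous g) (hw : w ≠ 0)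
    (hg1 : ∀ t ∈ Icc (0:ℝ) 1, HasDerivWithinAt g (g' t) (Icc 0 1) t)
    (hg2 : ∀ t ∈ Icc (0:ℝ) 1, HasDerivWithinAt g' (g'' t) (Icc 0 1) t)
    (hg' : ∫ t in (0:ℝ)..1, g' t ^ 2 ≠ 0) (hAB : A ≠ 0 ∨ B ≠ 0)
    (hbd : w ^ 2 * eigenCandidateDeriv g g' w A B 1 + B * g' 1 = 0) :
    ∃ t ∈ Icc (0:ℝ) 1, eigenCandidate g w A B t ≠ 0 := by
  by_contra! he
  have he' : ∀ t ∈ Icc (0:ℝ) 1, eigenCandidateDeriv g g' w A B t = 0 := fun t ht =>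
    eq_zero_of_hasDerivWithinAt_Icc one_pos he ht (hasDerivWithinAt_eigenCandidate hg (hg1 t ht))
  have hB : B = 0 := by
    by_contra hB
    have hg'' : ∀ t ∈ Icc (0:ℝ) 1, HasDerivWithinAt g' 0 (Icc 0 1) t := fun t ht => by
      have h := eq_zero_of_hasDerivWithinAt_Icc one_pos he' ht
        (hasDerivWithinAt_eigenCandidateDeriv hg hw (hg2 t ht))
      rw [he t ht, zero_add, div_eq_zero_iff, neg_eq_zero, mul_eq_zero] at h
      simpa [h.resolve_right (pow_ne_zero 2 hw) |>.resolve_left hB] using hg2 t ht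
    have hg'1 : g' 1 = 0 := by
      rw [he' 1 (right_mem_Icc.2 zero_le_one), mul_zero, zero_add] at hbd
      exact (mul_eq_zero.1 hbd).resolve_left hB
    have hconst := constant_of_hasDerivWithinAt_Icc_zero hg''
    refine hg' ((integral_congr (g := fun _ => 0) fun t ht => ?_).trans integral_zero)
    rw [uIcc_of_le zero_le_one] at ht
    simp only [hconst t ht, ← hconst 1 (right_mem_Icc.2 zero_le_one), hg'1]
    ring
  have hA : A = 0 := by
    have h := he' 0 (left_mem_Icc.2 zero_le_one)
    rwa [eigenCandidateDeriv_zero, hB, zero_mul, zero_div, sub_zero, div_eq_zero_iff,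
      or_iff_left hw] at h
  exact hAB.elim (· hA) (· hB)

theorem bG_eq_sinIntegral (lam : ℝ) : bG g lam = sinIntegral g (√lam) 1 := rfl

theorem cG_eq_integral_sinIntegral (lam : ℝ) :
    cG g lam = ∫ t in (0:ℝ)..1, g t * cos (t / √lam) * sinIntegral g (√lam) t := by
  refine integral_congr fun t _ => ?_
  simp only [sinIntegral, ← intervalIntegral.integral_const_mul]
  exact integral_congr fun u _ => by ring

theorem bG_congr {G : ℝ → ℝ} (h : EqOn g G (Icc 0 1)) (lam : ℝ) : bG g lam = bG G lam :=
  integral_congr fun t ht => by rw [uIcc_of_le zero_le_one] at ht; simp only [h ht]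

theorem cG_congr {G : ℝ → ℝ} (h : EqOn g G (Icc 0 1)) (lam : ℝ) : cG g lam = cG G lam := by
  refine integral_congr fun t ht => integral_congr fun u hu => ?_
  rw [uIcc_of_le zero_le_one] at ht
  rw [uIcc_of_le ht.1] at hu
  simp only [h ht, h (Icc_subset_Icc_right ht.2 hu)]

theorem integral_min_sub_mul_mul_eq {e : ℝ → ℝ} {lam B t : ℝ} (hg : Continuous g)
    (he : Continuous e) (hmin : ∫ s in (0:ℝ)..1, min t s * e s = lam * e t + B * g t)
    (hB : ∫ s in (0:ℝ)..1, g s * e s = B) :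
    ∫ s in (0:ℝ)..1, (min t s - g t * g s) * e s = lam * e t :=
  calc ∫ s in (0:ℝ)..1, (min t s - g t * g s) * e s
      = (∫ s in (0:ℝ)..1, min t s * e s) - g t * ∫ s in (0:ℝ)..1, g s * e s := by
        rw [← intervalIntegral.integral_const_mul, ← integral_sub
          (Continuous.intervalIntegrable (by fun_prop) _ _)
          (Continuous.intervalIntegrable (by fun_prop) _ _)]
        exact integral_congr fun s _ => by ring
    _ = lam * e t := by rw [hmin, hB]; ring

theorem exists_eigenfunction_of_continuous (hg : Continuous g)
    (hg1 : ∀ t ∈ Icc (0:ℝ) 1, HasDerivWithinAt g (g' t) (Icc 0 1) t)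
    (hg2 : ∀ t ∈ Icc (0:ℝ) 1, HasDerivWithinAt g' (g'' t) (Icc 0 1) t)
    (hg' : ∫ t in (0:ℝ)..1, g' t ^ 2 ≠ 0) {lam : ℝ} (hlam : 0 < lam)
    (heq : (lam * √lam + √lam * (∫ t in (0:ℝ)..1, g t ^ 2) + 2 * cG g lam) * cos (1 / √lam)
        + bG g lam ^ 2 * sin (1 / √lam) = 0) :
    ∃ e : ℝ → ℝ, ContinuousOn e (Icc 0 1) ∧ (∃ t ∈ Icc (0:ℝ) 1, e t ≠ 0) ∧
      ∀ t ∈ Icc (0:ℝ) 1, ∫ s in (0:ℝ)..1, (min t s - g t * g s) * e s = lam * e t := by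
  rw [bG_eq_sinIntegral, cG_eq_integral_sinIntegral] at heq
  set w := √lam
  have hw : w ≠ 0 := (sqrt_pos.2 hlam).ne'
  have hw2 : w ^ 2 = lam := sq_sqrt hlam.le
  set c := ∫ t in (0:ℝ)..1, g t * cos (t / w) * sinIntegral g w t
  -- The boundary condition `λ e'(1) + B g'(1) = 0` and the consistency condition
  -- `∫ g e = B` are linear in `(A, B)`, with determinant `-w³` times the left side of `heq`.
  obtain ⟨A, B, hAB, hbd, hcons⟩ := exists_ne_zero_of_mul_sub_mul_eq_zero
    (a := w ^ 3 * cos (1 / w)) (b := cosConv g w 1) (c := w ^ 3 * sinIntegral g w 1)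
    (d := cosIntegral g w 1 * sinIntegral g w 1 - 2 * c - w * (∫ t in (0:ℝ)..1, g t ^ 2) - w ^ 3)
    (by simp only [cosConv]; linear_combination (-w ^ 3) * heq - w ^ 4 * cos (1 / w) * hw2)
  set e := eigenCandidate g w A B
  have hbd' : w ^ 2 * eigenCandidateDeriv g g' w A B 1 + B * g' 1 = 0 := by
    rw [sq_mul_eigenCandidateDeriv_add hw]
    field_simp
    linear_combination hbd
  have hB : ∫ s in (0:ℝ)..1, g s * e s = B := by
    rw [integral_mul_eigenCandidate hg]
    field_simp
    linear_combination hcons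
  have hgreen := integral_min_mul_eq_of_hasDerivWithinAt (continuous_eigenCandidate hg)
    (f := fun t => lam * e t + B * g t)
    (f' := fun t => lam * eigenCandidateDeriv g g' w A B t + B * g' t)
    (fun t ht => ((hasDerivWithinAt_eigenCandidate hg (hg1 t ht)).const_mul lam).add
      ((hg1 t ht).const_mul B))
    (fun t ht => (((hasDerivWithinAt_eigenCandidateDeriv hg hw (hg2 t ht)).const_mul lam).add
      ((hg2 t ht).const_mul B)).congr_deriv (by rw [← hw2]; field_simp; ring))
    (by rw [← hw2]; exact sq_mul_eigenCandidate_zero_add hw) (by rw [← hw2]; exact hbd')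
  exact ⟨e, (continuous_eigenCandidate hg).continuousOn,
    exists_eigenCandidate_ne_zero hg hw hg1 hg2 hg' hAB hbd', fun t ht =>
      integral_min_sub_mul_mul_eq hg (continuous_eigenCandidate hg) (hgreen t ht) hB⟩

end MinKernel

theorem stmt4_general (g g' g'' : ℝ → ℝ)
    (hg1 : ∀ t ∈ Set.Icc (0:ℝ) 1, HasDerivWithinAt g (g' t) (Set.Icc 0 1) t)
    (hg2 : ∀ t ∈ Set.Icc (0:ℝ) 1, HasDerivWithinAt g' (g'' t) (Set.Icc 0 1) t)
    (hgnorm : ∫ u in (0:ℝ)..1, (g' u) ^ 2 = 1)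
    (lam : ℝ) (hlam : 0 < lam)
    (heq : (lam * Real.sqrt lam + Real.sqrt lam * (∫ t in (0:ℝ)..1, (g t) ^ 2)
          + 2 * cG g lam) * Real.cos (1 / Real.sqrt lam)
        + (bG g lam) ^ 2 * Real.sin (1 / Real.sqrt lam) = 0) :
    ∃ e : ℝ → ℝ, ContinuousOn e (Set.Icc 0 1) ∧
      (∃ t ∈ Set.Icc (0:ℝ) 1, e t ≠ 0) ∧
      ∀ t ∈ Set.Icc (0:ℝ) 1,
        (∫ s in (0:ℝ)..1, (min t s - g t * g s) * e s) = lam * e t := by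
  set G := IccExtend zero_le_one ((Icc (0:ℝ) 1).domRestrict g)
  have hGg : EqOn G g (Icc 0 1) := fun t ht => IccExtend_of_mem _ _ ht
  have hGg' : EqOn G g (uIcc 0 1) := uIcc_of_le (zero_le_one' ℝ) ▸ hGg
  have hG : Continuous G := continuous_IccExtend_iff.2 <|
    continuousOn_iff_continuous_domRestrict.1 fun t ht => (hg1 t ht).continuousWithinAt
  obtain ⟨e, he, hne, heig⟩ := MinKernel.exists_eigenfunction_of_continuous hG
    (fun t ht => (hg1 t ht).congr hGg (hGg ht)) hg2 (by rw [hgnorm]; exact one_ne_zero) hlam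
    (by rwa [MinKernel.bG_congr hGg, MinKernel.cG_congr hGg,
      integral_congr (g := fun t => g t ^ 2) fun t ht => by simp only [hGg' ht]])
  refine ⟨e, he, hne, fun t ht => ?_⟩
  rw [← heig t ht]
  exact integral_congr fun s hs => by simp only [hGg ht, hGg' hs]

/-- If `λ > 0` satisfies the eigenvalue equation
`(λ^{3/2} + √λ ∫₀¹ g² + 2 c_g(λ)) cos(1/√λ) + b_g(λ)² sin(1/√λ) = 0`, then `λ` is an
eigenvalue of the integral operator with kernel `R(s,t) = min(s,t) - g(s)g(t)`. -/
theorem stmt4 (g g' g'' : ℝ → ℝ)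
    (hg1 : ∀ t ∈ Set.Icc (0:ℝ) 1, HasDerivWithinAt g (g' t) (Set.Icc 0 1) t)
    (hg2 : ∀ t ∈ Set.Icc (0:ℝ) 1, HasDerivWithinAt g' (g'' t) (Set.Icc 0 1) t)
    (hg2c : ContinuousOn g'' (Set.Icc 0 1))
    (hg0 : g 0 = 0)
    (hgnorm : ∫ u in (0:ℝ)..1, (g' u) ^ 2 = 1)
    (lam : ℝ) (hlam : 0 < lam)
    (heq : (lam * Real.sqrt lam + Real.sqrt lam * (∫ t in (0:ℝ)..1, (g t) ^ 2)
          + 2 * cG g lam) * Real.cos (1 / Real.sqrt lam)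
        + (bG g lam) ^ 2 * Real.sin (1 / Real.sqrt lam) = 0) :
    ∃ e : ℝ → ℝ, ContinuousOn e (Set.Icc 0 1) ∧
      (∃ t ∈ Set.Icc (0:ℝ) 1, e t ≠ 0) ∧
      ∀ t ∈ Set.Icc (0:ℝ) 1,
        (∫ s in (0:ℝ)..1, (min t s - g t * g s) * e s) = lam * e t :=
  stmt4_general g g' g'' hg1 hg2 hgnorm lam hlam heq
end
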